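/- Let ε with 0 < ε < 1/2, let F be a finite family of finite sets with |F| ≥ 2 that is (1−ε)-approximate union closed, and let A, B be independent uniformly random elements of F. Then the Shannon entropy of the union satisfies H(A ∪ B) ≤ 2ε·log₂(1/ε) + (1 + 2ε)·log₂|F|. -/

import Mathlib

open scoped Classical in
/-- Probability of an event `E` under the probability mass function `μ`
on a finite sample space. -/
noncomputable def probOf {Ω : Type*} [Fintype Ω] (μ : Ω → ℝ) (E : Ω → Prop) : ℝ :=
  ∑ ω, if E ω then μ ω else 0

/-- Shannon entropy (base 2) of a random variable `X` taking finitely many values, under the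
probability mass function `μ`; the sum ranges over the image of `X`
(note `Real.logb 2 0 = 0` by convention). -/
noncomputable def entropy {Ω V : Type*} [Fintype Ω] [DecidableEq V]
    (μ : Ω → ℝ) (X : Ω → V) : ℝ :=
  ∑ v ∈ Finset.image X Finset.univ,
    -(probOf μ (fun ω => X ω = v) * Real.logb 2 (probOf μ (fun ω => X ω = v)))

/-- A finite family `F` is `c`-approximate union closed if at least a `c`-fraction of the
ordered pairs `(A, B) ∈ F × F` satisfy `A ∪ B ∈ F`. -/
def ApproxUnionClosed {α : Type*} [DecidableEq α] (F : Finset (Finset α)) (c : ℝ) : Prop :=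
  ((((F ×ˢ F).filter fun p => p.1 ∪ p.2 ∈ F).card : ℝ)) ≥ c * ((F.card : ℝ) * (F.card : ℝ))

/-!
Almost surely `(A, B) ∈ F × F`, so `A ∪ B` is supported on `F ⊻ F`, a family of at most `|F|²`
sets, and it falls outside `F` with some probability `q ≤ ε`. Grouping its distribution into the
part on `F` (at most `|F|` values) and the rest (at most `|F|²` values) gives, in nats,
`H(A ∪ B) ≤ h(q) + (1 - q) log |F| + 2q log |F|`. The binary entropy `h` increases on `[0, 1/2]`,
so `h(q) ≤ h(ε) ≤ ε log (1/ε) + ε`, and the spare `ε` is absorbed because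
`log (|F| / ε) ≥ log 4 > 1`.
-/

open Finset Real
open scoped FinsetFamily SetFamily

theorem sum_negMulLog_le_negMulLog_sum_add_mul_log {ι : Type*} (s : Finset ι) (p : ι → ℝ)
    (hp : ∀ i ∈ s, 0 ≤ p i) {M : ℝ} (hM : (#s : ℝ) ≤ M) :
    ∑ i ∈ s, negMulLog (p i) ≤ negMulLog (∑ i ∈ s, p i) + (∑ i ∈ s, p i) * log M := by
  rcases s.eq_empty_or_nonempty with rfl | hs
  · simp
  have hn : (0 : ℝ) < #s := by exact_mod_cast hs.card_pos
  have hjensen := concaveOn_negMulLog.le_map_sum (t := s) (w := fun _ => (#s : ℝ)⁻¹) (p := p)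
    (fun _ _ => by positivity) (by simp [hn.ne']) hp
  rw [← smul_sum, ← smul_sum, smul_eq_mul, smul_eq_mul, negMulLog_mul, negMulLog, log_inv]
    at hjensen
  have hlog : (∑ i ∈ s, p i) * log #s ≤ (∑ i ∈ s, p i) * log M :=
    mul_le_mul_of_nonneg_left (log_le_log hn hM) (sum_nonneg hp)
  have := mul_le_mul_of_nonneg_left hjensen hn.le
  field_simp at this
  linarith

theorem sum_negMulLog_le_binEntropy_add {ι : Type*} (s : Finset ι) (p : ι → ℝ)
    (hp : ∀ i ∈ s, 0 ≤ p i) (hs : ∑ i ∈ s, p i = 1) (P : ι → Prop) [DecidablePred P]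
    {M₁ M₂ : ℝ} (h₁ : (#(s.filter P) : ℝ) ≤ M₁) (h₂ : (#(s.filter (¬ P ·)) : ℝ) ≤ M₂) :
    ∑ i ∈ s, negMulLog (p i) ≤
      binEntropy (∑ i ∈ s.filter (¬ P ·), p i)
        + (1 - ∑ i ∈ s.filter (¬ P ·), p i) * log M₁
        + (∑ i ∈ s.filter (¬ P ·), p i) * log M₂ := by
  have hsplit : ∑ i ∈ s.filter P, p i = 1 - ∑ i ∈ s.filter (¬ P ·), p i := by
    rw [← hs, ← sum_filter_add_sum_filter_not s P]; ring
  rw [binEntropy_eq_negMulLog_add_negMulLog_one_sub, ← sum_filter_add_sum_filter_not s P, ← hsplit]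
  have hp' (Q : ι → Prop) [DecidablePred Q] : ∀ i ∈ s.filter Q, 0 ≤ p i :=
    fun i hi => hp i (mem_of_mem_filter i hi)
  have hP := sum_negMulLog_le_negMulLog_sum_add_mul_log _ p (hp' P) h₁
  have hnotP := sum_negMulLog_le_negMulLog_sum_add_mul_log _ p (hp' (¬ P ·)) h₂
  linarith

theorem binEntropy_add_mul_log_le {q ε N : ℝ} (hq : 0 ≤ q) (hqε : q ≤ ε) (hε0 : 0 < ε)
    (hε : ε < 1 / 2) (hN : 2 ≤ N) :
    binEntropy q + (1 - q) * log N + q * log (N * N) ≤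
      2 * ε * log (1 / ε) + (1 + 2 * ε) * log N := by
  have hmono : binEntropy q ≤ binEntropy ε :=
    binEntropy_strictMonoOn.monotoneOn ⟨hq, by linarith⟩ ⟨hε0.le, by linarith⟩ hqε
  have hε' : binEntropy ε ≤ ε * log (1 / ε) + ε := by
    have := negMulLog_le_one_sub_self (x := 1 - ε) (by linarith)
    rw [binEntropy_eq_negMulLog_add_negMulLog_one_sub, negMulLog, one_div, log_inv]
    linarith
  have hlogN : 0 ≤ log N := log_nonneg (by linarith)
  have hone : 1 ≤ log (1 / ε) + log N := by
    have h2ε : log 2 ≤ log (1 / ε) := log_le_log two_pos (by rw [le_div_iff₀ hε0]; linarith)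
    linarith [log_le_log two_pos hN, log_two_gt_d9]
  rw [log_mul (by positivity) (by positivity)]
  nlinarith

section probOf

variable {Ω : Type*} [Fintype Ω] {μ : Ω → ℝ}

theorem probOf_nonneg (hμ : ∀ ω, 0 ≤ μ ω) (E : Ω → Prop) : 0 ≤ probOf μ E :=
  sum_nonneg fun ω _ => by split_ifs <;> simp [hμ ω]

theorem probOf_eq_sum_of_forall {E : Ω → Prop} (h : ∀ ω, E ω) : probOf μ E = ∑ ω, μ ω := by
  simp [probOf, h]

theorem sum_probOf_eq_probOf_mem {ι : Type*} (g : Ω → ι) (t : Finset ι) :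
    ∑ v ∈ t, probOf μ (fun ω => g ω = v) = probOf μ (fun ω => g ω ∈ t) := by
  classical
  simp only [probOf]
  rw [sum_comm]
  exact sum_congr rfl fun ω _ => by convert sum_ite_eq t (g ω) fun _ => μ ω

theorem probOf_mono_of_ne_zero (hμ : ∀ ω, 0 ≤ μ ω) {E E' : Ω → Prop}
    (h : ∀ ω, μ ω ≠ 0 → E ω → E' ω) : probOf μ E ≤ probOf μ E' := by
  refine sum_le_sum fun ω _ => ?_
  by_cases hω : μ ω = 0
  · simp [hω]
  · split_ifs with hE hE' <;> simp_all

theorem exists_of_probOf_ne_zero {E : Ω → Prop} (h : probOf μ E ≠ 0) :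
    ∃ ω, μ ω ≠ 0 ∧ E ω := by
  obtain ⟨ω, -, hω⟩ := exists_ne_zero_of_sum_ne_zero h
  by_cases hE : E ω
  · exact ⟨ω, by simpa [hE] using hω, hE⟩
  · simp [hE] at hω

theorem probOf_add_probOf_not (E : Ω → Prop) :
    probOf μ E + probOf μ (fun ω => ¬ E ω) = ∑ ω, μ ω := by
  rw [probOf, probOf, ← sum_add_distrib]
  exact sum_congr rfl fun ω _ => by split_ifs <;> simp

theorem of_probOf_eq_one (hμ : ∀ ω, 0 ≤ μ ω) (hμ1 : ∑ ω, μ ω = 1) {E : Ω → Prop}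
    (h : probOf μ E = 1) {ω : Ω} (hω : μ ω ≠ 0) : E ω := by
  by_contra hE
  have hle : μ ω ≤ probOf μ (fun ω => ¬ E ω) := by
    rw [probOf]
    refine le_trans (le_of_eq ?_) (single_le_sum (fun ω' _ => ?_) (mem_univ ω))
    · simp [hE]
    · split_ifs <;> simp [hμ ω']
  linarith [probOf_add_probOf_not (μ := μ) E, (hμ ω).lt_of_ne' hω]

theorem entropy_eq_sum_negMulLog {V : Type*} [DecidableEq V] (X : Ω → V) :
    entropy μ X =
      (∑ v ∈ univ.image X, negMulLog (probOf μ (fun ω => X ω = v))) / log 2 := by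
  rw [entropy, sum_div]
  exact sum_congr rfl fun v _ => by rw [negMulLog, logb]; ring

end probOf

section UniformPair

variable {α Ω : Type*} [Fintype Ω] {μ : Ω → ℝ} {F : Finset (Finset α)} {A B : Ω → Finset α}

theorem probOf_pair_mem_of_subset
    (hunif : ∀ C ∈ F, ∀ D ∈ F,
      probOf μ (fun ω => A ω = C ∧ B ω = D) = 1 / ((#F : ℝ) * #F))
    {s : Finset (Finset α × Finset α)} (hs : s ⊆ F ×ˢ F) :
    probOf μ (fun ω => (A ω, B ω) ∈ s) = #s / ((#F : ℝ) * #F) := by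
  rw [← sum_probOf_eq_probOf_mem, sum_congr rfl fun pr hpr => ?_, sum_const, nsmul_eq_mul,
    mul_one_div]
  obtain ⟨hC, hD⟩ := mem_product.1 (hs hpr)
  simpa only [Prod.ext_iff] using hunif _ hC _ hD

theorem pair_mem_product_of_ne_zero (hμ : ∀ ω, 0 ≤ μ ω) (hμ1 : ∑ ω, μ ω = 1)
    (hunif : ∀ C ∈ F, ∀ D ∈ F,
      probOf μ (fun ω => A ω = C ∧ B ω = D) = 1 / ((#F : ℝ) * #F))
    (hF : F.Nonempty) {ω : Ω} (hω : μ ω ≠ 0) : (A ω, B ω) ∈ F ×ˢ F := by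
  have hN : (#F : ℝ) ≠ 0 := by exact_mod_cast hF.card_pos.ne'
  refine of_probOf_eq_one (E := fun ω => (A ω, B ω) ∈ F ×ˢ F) hμ hμ1 ?_ hω
  rw [probOf_pair_mem_of_subset hunif subset_rfl, card_product, Nat.cast_mul]
  exact div_self (mul_ne_zero hN hN)

variable [DecidableEq α]

theorem sum_image_union_eq_sum_sups (hμ : ∀ ω, 0 ≤ μ ω) (hμ1 : ∑ ω, μ ω = 1)
    (hunif : ∀ C ∈ F, ∀ D ∈ F,
      probOf μ (fun ω => A ω = C ∧ B ω = D) = 1 / ((#F : ℝ) * #F))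
    (hF : F.Nonempty) (f : ℝ → ℝ) (hf : f 0 = 0) :
    ∑ v ∈ univ.image (fun ω => A ω ∪ B ω), f (probOf μ (fun ω => A ω ∪ B ω = v)) =
      ∑ v ∈ F ⊻ F, f (probOf μ (fun ω => A ω ∪ B ω = v)) := by
  refine (sum_subset (fun v hv => ?_) fun v _ hv => ?_).symm
  · obtain ⟨C, hC, D, hD, rfl⟩ := mem_sups.1 hv
    have hN : (#F : ℝ) ≠ 0 := by exact_mod_cast hF.card_pos.ne'
    have hCD : probOf μ (fun ω => A ω = C ∧ B ω = D) ≠ 0 := by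
      rw [hunif C hC D hD]; exact one_div_ne_zero (mul_ne_zero hN hN)
    obtain ⟨ω, -, rfl, rfl⟩ := exists_of_probOf_ne_zero hCD
    exact mem_image_of_mem _ (mem_univ ω)
  · suffices probOf μ (fun ω => A ω ∪ B ω = v) = 0 by rw [this, hf]
    by_contra h
    obtain ⟨ω, hω, rfl⟩ := exists_of_probOf_ne_zero h
    obtain ⟨hA, hB⟩ := mem_product.1 (pair_mem_product_of_ne_zero hμ hμ1 hunif hF hω)
    exact hv (mem_sups.2 ⟨_, hA, _, hB, sup_eq_union⟩)

theorem probOf_union_not_mem_le (hμ : ∀ ω, 0 ≤ μ ω) (hμ1 : ∑ ω, μ ω = 1)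
    (hunif : ∀ C ∈ F, ∀ D ∈ F,
      probOf μ (fun ω => A ω = C ∧ B ω = D) = 1 / ((#F : ℝ) * #F))
    (hF : F.Nonempty) {ε : ℝ} (hUC : ApproxUnionClosed F (1 - ε)) :
    probOf μ (fun ω => A ω ∪ B ω ∉ F) ≤ ε := by
  set bad := (F ×ˢ F).filter fun pr => pr.1 ∪ pr.2 ∉ F
  have hN : (0 : ℝ) < #F := by exact_mod_cast hF.card_pos
  have hcard : (#((F ×ˢ F).filter fun pr => pr.1 ∪ pr.2 ∈ F) : ℝ) + #bad = #F * #F := by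
    rw [← Nat.cast_mul, ← card_product,
      ← card_filter_add_card_filter_not (s := F ×ˢ F) fun pr => pr.1 ∪ pr.2 ∈ F, Nat.cast_add]
  calc probOf μ (fun ω => A ω ∪ B ω ∉ F)
      ≤ probOf μ (fun ω => (A ω, B ω) ∈ bad) := probOf_mono_of_ne_zero hμ fun ω hω hX =>
        mem_filter.2 ⟨pair_mem_product_of_ne_zero hμ hμ1 hunif hF hω, hX⟩
    _ = #bad / ((#F : ℝ) * #F) := probOf_pair_mem_of_subset hunif (filter_subset _ _)
    _ ≤ ε := by
      rw [div_le_iff₀ (by positivity)]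
      unfold ApproxUnionClosed at hUC
      linarith

end UniformPair

/-- If `F` is a `(1-ε)`-approximate union closed family with `|F| ≥ 2` (where `0 < ε < 1/2`)
and `A, B` are independent uniformly random elements of `F`, then
`H(A ∪ B) ≤ 2 ε log₂(1/ε) + (1 + 2ε) log₂ |F|`. -/
theorem entropy_union_upper {α : Type*} [DecidableEq α] {Ω : Type*} [Fintype Ω]
    (ε : ℝ) (hε0 : 0 < ε) (hε : ε < 1 / 2)
    (F : Finset (Finset α)) (hF : 2 ≤ F.card)
    (hUC : ApproxUnionClosed F (1 - ε))
    (μ : Ω → ℝ) (hμ0 : ∀ ω, 0 ≤ μ ω) (hμ1 : ∑ ω, μ ω = 1)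
    (A B : Ω → Finset α)
    (hunif : ∀ C ∈ F, ∀ D ∈ F,
      probOf μ (fun ω => A ω = C ∧ B ω = D) = 1 / ((F.card : ℝ) * (F.card : ℝ))) :
    entropy μ (fun ω => A ω ∪ B ω) ≤
      2 * ε * Real.logb 2 (1 / ε) + (1 + 2 * ε) * Real.logb 2 (F.card : ℝ) := by
  set p : Finset α → ℝ := fun v => probOf μ (fun ω => A ω ∪ B ω = v)
  have hF₀ : F.Nonempty := card_pos.1 (by omega)
  have hN : (2 : ℝ) ≤ #F := by exact_mod_cast hF
  have hsum := sum_image_union_eq_sum_sups hμ0 hμ1 hunif hF₀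
  have hmass : ∑ v ∈ F ⊻ F, p v = 1 := by
    refine (hsum id rfl).symm.trans ((sum_probOf_eq_probOf_mem _ _).trans ?_)
    exact (probOf_eq_sum_of_forall fun ω => mem_image_of_mem _ (mem_univ ω)).trans hμ1
  have hq : ∑ v ∈ (F ⊻ F).filter (· ∉ F), p v ≤ ε := by
    rw [sum_probOf_eq_probOf_mem]
    refine le_trans (probOf_mono_of_ne_zero hμ0 fun _ _ h => (mem_filter.1 h).2) ?_
    exact probOf_union_not_mem_le hμ0 hμ1 hunif hF₀ hUC
  have hH := sum_negMulLog_le_binEntropy_add (F ⊻ F) p (fun v _ => probOf_nonneg hμ0 _) hmass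
    (· ∈ F) (M₁ := #F) (M₂ := #F * #F)
    (by exact_mod_cast card_le_card fun v hv => (mem_filter.1 hv).2)
    (by exact_mod_cast (card_filter_le _ _).trans (card_sups_le F F))
  rw [entropy_eq_sum_negMulLog, hsum _ negMulLog_zero, div_le_iff₀ (log_pos one_lt_two)]
  calc _ ≤ _ := hH
    _ ≤ 2 * ε * log (1 / ε) + (1 + 2 * ε) * log #F :=
      binEntropy_add_mul_log_le (sum_nonneg fun v _ => probOf_nonneg hμ0 _) hq hε0 hε hN
    _ = _ := by simp only [logb]; field_simp
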